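/- Let C be a braided monoidal category in which every object has a left dual, and assume that the tensor product of a projective object with any object (on either side) is again projective. If n ≥ 2 and the n-fold tensor power M^{⊗n} of an object M is projective, then M^{⊗(n-1)} is projective. -/
import Mathlib


open CategoryTheory MonoidalCategory

/-- `tensorPow M n` is the `n`-fold tensor power `M^{⊗n}` of `M`,
with `M^{⊗1} = M` (and the convention `M^{⊗0} = 𝟙_ C`). -/
def tensorPow {C : Type*} [Category C] [MonoidalCategory C] (M : C) : ℕ → C
  | 0 => 𝟙_ C
  | 1 => M
  | n + 2 => tensorPow M (n + 1) ⊗ M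

/-- A retract of a projective object is projective. -/
theorem projective_of_retract' {C : Type*} [Category C] {X P : C}
    (i : X ⟶ P) (r : P ⟶ X) (hir : i ≫ r = 𝟙 X) (hp : Projective P) :
    Projective X := by
  constructor
  intro E Z f e he
  obtain ⟨f', hf'⟩ := hp.factors (r ≫ f) e
  exact ⟨i ≫ f', by rw [Category.assoc, hf', ← Category.assoc, hir, Category.id_comp]⟩

theorem projective_of_iso' {C : Type*} [Category C] {X P : C}
    (e : X ≅ P) (hp : Projective P) : Projective X :=
  projective_of_retract' e.hom e.inv e.hom_inv_id hp

/-- Key descent step: if `(W ⊗ M) ⊗ M` is projective, so is `W ⊗ M`. -/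
theorem key_step {C : Type*} [Category C] [MonoidalCategory C] [BraidedCategory C]
    [∀ X : C, HasLeftDual X]
    (hP₁ : ∀ P X : C, Projective P → Projective (P ⊗ X))
    (M W : C) (h : Projective ((W ⊗ M) ⊗ M)) : Projective (W ⊗ M) := by
  have hproj : Projective (((W ⊗ M) ⊗ M) ⊗ (ᘁM)) := hP₁ _ _ h
  have e : W ⊗ (M ⊗ ((ᘁM) ⊗ M)) ≅ ((W ⊗ M) ⊗ M) ⊗ (ᘁM) :=
    (whiskerLeftIso W ((whiskerLeftIso M (β_ (ᘁM) M)) ≪≫ (α_ M M (ᘁM)).symm)) ≪≫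
      (α_ W (M ⊗ M) (ᘁM)).symm ≪≫ whiskerRightIso (α_ W M M).symm (ᘁM)
  have hY : Projective (W ⊗ (M ⊗ ((ᘁM) ⊗ M))) := projective_of_iso' e hproj
  refine projective_of_retract'
    (W ◁ ((ρ_ M).inv ≫ M ◁ η_ (ᘁM) M))
    (W ◁ ((α_ M (ᘁM) M).inv ≫ ε_ (ᘁM) M ▷ M ≫ (λ_ M).hom)) ?_ hY
  rw [← MonoidalCategory.whiskerLeft_comp, ← MonoidalCategory.whiskerLeft_id]
  congr 1
  simp only [Category.assoc, ExactPairing.coevaluation_evaluation_assoc]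
  simp

/-- In a braided monoidal category in which every object has a left dual and in which
the tensor product of a projective object with any object (on either side) is projective,
if `M^{⊗n}` is projective for some `n ≥ 2`, then `M^{⊗(n-1)}` is projective. -/
theorem projective_tensorPow_pred_of_projective_tensorPow
    {C : Type*} [Category C] [MonoidalCategory C] [BraidedCategory C]
    [∀ X : C, HasLeftDual X]
    (hP₁ : ∀ P X : C, Projective P → Projective (P ⊗ X))
    (hP₂ : ∀ P X : C, Projective P → Projective (X ⊗ P))
    (M : C) (n : ℕ) (hn : 2 ≤ n) (h : Projective (tensorPow M n)) :
    Projective (tensorPow M (n - 1)) := by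
  obtain ⟨k, rfl⟩ : ∃ k, n = k + 2 := ⟨n - 2, by omega⟩
  show Projective (tensorPow M (k + 1))
  match k with
  | 0 =>
    -- goal : Projective (tensorPow M 1) = Projective M
    have h' : Projective ((𝟙_ C ⊗ M) ⊗ M) := by
      refine projective_of_iso' (whiskerRightIso (λ_ M) M) ?_
      exact h
    have := key_step hP₁ M (𝟙_ C) h'
    exact projective_of_iso' (λ_ M).symm this
  | k + 1 =>
    -- goal : Projective (tensorPow M (k+2)) = Projective (tensorPow M (k+1) ⊗ M)
    exact key_step hP₁ M (tensorPow M (k + 1)) h
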